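/- arXiv:math/0509618 — 5 statements merged into one kernel-verified Lean document; each statement's English description precedes it below -/
import Mathlib

section
/- Let S be an integrally closed domain of mixed characteristic p > 0 containing an element π with π^p = p, and suppose the Frobenius endomorphism on S/pS is surjective. Then the Frobenius induces a ring isomorphism S/πS ≅ S/pS, i.e. for x ∈ S, x^p ∈ pS if and only if x ∈ πS. -/
/-!
Frobenius `x ↦ x ^ p` is a ring map `S → S/pS` because `p` divides the middle binomial
coefficients; it is onto by hypothesis. Its kernel is `πS`: if `x ^ p = π ^ p θ`, then `x / π`
is a root of `t ^ p - θ`, hence lies in `S` by integral closedness.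
-/

open Ideal

section Frobenius

variable {R : Type*} [CommRing R] {p : ℕ}

/-- Unlike `frobenius`, this needs no `CharP` instance on `R ⧸ span {p}`, which fails when `p`
is a unit. -/
def frobeniusToQuotient (hp : p.Prime) : R →+* R ⧸ span {(p : R)} where
  toFun x := Ideal.Quotient.mk _ (x ^ p)
  map_one' := by rw [one_pow, map_one]
  map_mul' x y := by rw [mul_pow, map_mul]
  map_zero' := by rw [zero_pow hp.ne_zero, map_zero]
  map_add' x y := by
    obtain ⟨r, hr⟩ := exists_add_pow_prime_eq hp x y
    rw [hr, map_add, map_add, add_eq_left, Ideal.Quotient.eq_zero_iff_mem]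
    exact mem_span_singleton.mpr ⟨x * y * r, by ring⟩

theorem frobeniusToQuotient_apply (hp : p.Prime) (x : R) :
    frobeniusToQuotient hp x = Ideal.Quotient.mk _ (x ^ p) :=
  rfl

theorem frobeniusToQuotient_surjective (hp : p.Prime)
    (hfrob : ∀ x : R, ∃ y : R, y ^ p - x ∈ span {(p : R)}) :
    Function.Surjective (frobeniusToQuotient (R := R) hp) := by
  intro z
  obtain ⟨x, rfl⟩ := Ideal.Quotient.mk_surjective z
  obtain ⟨y, hy⟩ := hfrob x
  exact ⟨y, Ideal.Quotient.eq.mpr hy⟩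

end Frobenius

theorem pow_mem_span_pow_iff {R : Type*} [CommRing R] [IsDomain R] [IsIntegrallyClosed R]
    {n : ℕ} (hn : n ≠ 0) (a x : R) : x ^ n ∈ span {a ^ n} ↔ x ∈ span {a} := by
  rw [mem_span_singleton, mem_span_singleton, IsIntegrallyClosed.pow_dvd_pow_iff hn]

theorem ker_frobeniusToQuotient {R : Type*} [CommRing R] [IsDomain R] [IsIntegrallyClosed R]
    {p : ℕ} (hp : p.Prime) {π : R} (hπ : π ^ p = (p : R)) :
    RingHom.ker (frobeniusToQuotient hp) = span {π} := by
  ext x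
  rw [RingHom.mem_ker, frobeniusToQuotient_apply, Ideal.Quotient.eq_zero_iff_mem, ← hπ,
    pow_mem_span_pow_iff hp.ne_zero]

theorem frobenius_iso_mod_pi_general
    (p : ℕ) (hp : p.Prime)
    (S : Type) [CommRing S] [IsDomain S] [IsIntegrallyClosed S]
    (π : S) (hπ : π ^ p = (p : S))
    (hfrob : ∀ x : S, ∃ y : S, y ^ p - x ∈ Ideal.span {(p : S)}) :
    (∃ φ : (S ⧸ Ideal.span {π}) ≃+* (S ⧸ Ideal.span {(p : S)}),
      ∀ x : S, φ (Ideal.Quotient.mk _ x) = Ideal.Quotient.mk _ (x ^ p)) ∧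
    ∀ x : S, x ^ p ∈ Ideal.span {(p : S)} ↔ x ∈ Ideal.span {π} := by
  refine ⟨⟨(quotEquivOfEq (ker_frobeniusToQuotient hp hπ).symm).trans
    (RingHom.quotientKerEquivOfSurjective (frobeniusToQuotient_surjective hp hfrob)),
    fun x => rfl⟩, fun x => ?_⟩
  rw [← hπ]
  exact pow_mem_span_pow_iff hp.ne_zero π x

/-- Let `S` be an integrally closed domain of mixed characteristic `p > 0` containing an
element `π` with `π^p = p`, and suppose the Frobenius endomorphism on `S/pS` is
surjective.  Then Frobenius induces a ring isomorphism `S/πS ≅ S/pS`; in particular, for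
`x ∈ S`, `x^p ∈ pS` if and only if `x ∈ πS`. -/
theorem frobenius_iso_mod_pi
    (p : ℕ) (hp : p.Prime)
    (S : Type) [CommRing S] [IsDomain S] [IsIntegrallyClosed S]
    (hp0 : (p : S) ≠ 0) (hpu : ¬ IsUnit (p : S))
    (π : S) (hπ : π ^ p = (p : S))
    (hfrob : ∀ x : S, ∃ y : S, y ^ p - x ∈ Ideal.span {(p : S)}) :
    (∃ φ : (S ⧸ Ideal.span {π}) ≃+* (S ⧸ Ideal.span {(p : S)}),
      ∀ x : S, φ (Ideal.Quotient.mk _ x) = Ideal.Quotient.mk _ (x ^ p)) ∧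
    ∀ x : S, x ^ p ∈ Ideal.span {(p : S)} ↔ x ∈ Ideal.span {π} :=
  frobenius_iso_mod_pi_general p hp S π hπ hfrob
end

section
/- Let λ be a function on a class of modules taking values in [0,∞] that is additive on short exact sequences. For a short exact sequence 0 → N' → N → N'' → 0 of modules over a commutative ring and elements a, b of the ring, one has λ(abN) ≤ λ(aN') + λ(bN''), where aN denotes the image of multiplication by a. -/
open scoped ENNReal

section aux

variable (A : Type) [CommRing A]

theorem lam_le_of_equiv
    (lam : ∀ (N : Type) [AddCommGroup N] [Module A N], ℝ≥0∞)
    (hadd : ∀ (M₁ M₂ M₃ : Type) [AddCommGroup M₁] [Module A M₁] [AddCommGroup M₂]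
      [Module A M₂] [AddCommGroup M₃] [Module A M₃]
      (f : M₁ →ₗ[A] M₂) (g : M₂ →ₗ[A] M₃),
      Function.Injective f → Function.Surjective g → Function.Exact f g →
        lam M₂ = lam M₁ + lam M₃)
    (P Q : Type) [AddCommGroup P] [Module A P]
    [AddCommGroup Q] [Module A Q] (e : P ≃ₗ[A] Q) : lam P ≤ lam Q := by
  have h := hadd P Q PUnit e.toLinearMap 0 e.injective
    (fun x => ⟨0, Subsingleton.elim _ _⟩)
    (by
      intro y
      simp only [LinearMap.zero_apply]
      constructor
      · intro _
        exact e.surjective y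
      · intro _
        trivial)
  rw [h]
  exact self_le_add_right _ _

theorem lam_eq_of_equiv
    (lam : ∀ (N : Type) [AddCommGroup N] [Module A N], ℝ≥0∞)
    (hadd : ∀ (M₁ M₂ M₃ : Type) [AddCommGroup M₁] [Module A M₁] [AddCommGroup M₂]
      [Module A M₂] [AddCommGroup M₃] [Module A M₃]
      (f : M₁ →ₗ[A] M₂) (g : M₂ →ₗ[A] M₃),
      Function.Injective f → Function.Surjective g → Function.Exact f g →
        lam M₂ = lam M₁ + lam M₃)
    (P Q : Type) [AddCommGroup P] [Module A P]
    [AddCommGroup Q] [Module A Q] (e : P ≃ₗ[A] Q) : lam P = lam Q :=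
  le_antisymm (lam_le_of_equiv A lam hadd P Q e) (lam_le_of_equiv A lam hadd Q P e.symm)

theorem lam_split
    (lam : ∀ (N : Type) [AddCommGroup N] [Module A N], ℝ≥0∞)
    (hadd : ∀ (M₁ M₂ M₃ : Type) [AddCommGroup M₁] [Module A M₁] [AddCommGroup M₂]
      [Module A M₂] [AddCommGroup M₃] [Module A M₃]
      (f : M₁ →ₗ[A] M₂) (g : M₂ →ₗ[A] M₃),
      Function.Injective f → Function.Surjective g → Function.Exact f g →
        lam M₂ = lam M₁ + lam M₃)
    (P Q : Type) [AddCommGroup P] [Module A P]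
    [AddCommGroup Q] [Module A Q] (u : P →ₗ[A] Q) :
    lam P = lam (LinearMap.ker u) + lam (LinearMap.range u) := by
  refine hadd _ _ _ (LinearMap.ker u).subtype u.rangeRestrict
    (Submodule.injective_subtype _) (LinearMap.surjective_rangeRestrict u) ?_
  rw [LinearMap.exact_iff, LinearMap.ker_rangeRestrict, Submodule.range_subtype]

theorem lam_sub
    (lam : ∀ (N : Type) [AddCommGroup N] [Module A N], ℝ≥0∞)
    (hadd : ∀ (M₁ M₂ M₃ : Type) [AddCommGroup M₁] [Module A M₁] [AddCommGroup M₂]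
      [Module A M₂] [AddCommGroup M₃] [Module A M₃]
      (f : M₁ →ₗ[A] M₂) (g : M₂ →ₗ[A] M₃),
      Function.Injective f → Function.Surjective g → Function.Exact f g →
        lam M₂ = lam M₁ + lam M₃)
    (Q : Type) [AddCommGroup Q] [Module A Q] (p : Submodule A Q) :
    lam p ≤ lam Q := by
  have h := hadd p Q (Q ⧸ p) p.subtype p.mkQ (Submodule.injective_subtype p)
    (Submodule.mkQ_surjective p)
    (by rw [LinearMap.exact_iff, Submodule.ker_mkQ, Submodule.range_subtype])
  rw [h]
  exact self_le_add_right _ _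

theorem lam_le_of_injective
    (lam : ∀ (N : Type) [AddCommGroup N] [Module A N], ℝ≥0∞)
    (hadd : ∀ (M₁ M₂ M₃ : Type) [AddCommGroup M₁] [Module A M₁] [AddCommGroup M₂]
      [Module A M₂] [AddCommGroup M₃] [Module A M₃]
      (f : M₁ →ₗ[A] M₂) (g : M₂ →ₗ[A] M₃),
      Function.Injective f → Function.Surjective g → Function.Exact f g →
        lam M₂ = lam M₁ + lam M₃)
    (P Q : Type) [AddCommGroup P] [Module A P]
    [AddCommGroup Q] [Module A Q] (u : P →ₗ[A] Q) (hu : Function.Injective u) :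
    lam P ≤ lam Q :=
  le_trans
    (lam_le_of_equiv A lam hadd P (LinearMap.range u) (LinearEquiv.ofInjective u hu))
    (lam_sub A lam hadd Q (LinearMap.range u))

theorem lam_mono
    (lam : ∀ (N : Type) [AddCommGroup N] [Module A N], ℝ≥0∞)
    (hadd : ∀ (M₁ M₂ M₃ : Type) [AddCommGroup M₁] [Module A M₁] [AddCommGroup M₂]
      [Module A M₂] [AddCommGroup M₃] [Module A M₃]
      (f : M₁ →ₗ[A] M₂) (g : M₂ →ₗ[A] M₃),
      Function.Injective f → Function.Surjective g → Function.Exact f g →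
        lam M₂ = lam M₁ + lam M₃)
    (Q : Type) [AddCommGroup Q] [Module A Q] {p q : Submodule A Q}
    (h : p ≤ q) : lam p ≤ lam q :=
  lam_le_of_injective A lam hadd p q (Submodule.inclusion h)
    (Submodule.inclusion_injective h)

end aux

/-- Let `λ` be a `[0,∞]`-valued function on (a universe of) modules over a commutative ring
`A` which is additive on short exact sequences.  For a short exact sequence
`0 → N' → N → N'' → 0` of `A`-modules and elements `a b : A`, one has
`λ(abN) ≤ λ(aN') + λ(bN'')`, where `aN` denotes the image of multiplication by `a`. -/
theorem lambda_smul_le_of_ses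
    (A : Type) [CommRing A]
    (lam : ∀ (N : Type) [AddCommGroup N] [Module A N], ℝ≥0∞)
    (hadd : ∀ (M₁ M₂ M₃ : Type) [AddCommGroup M₁] [Module A M₁] [AddCommGroup M₂]
      [Module A M₂] [AddCommGroup M₃] [Module A M₃]
      (f : M₁ →ₗ[A] M₂) (g : M₂ →ₗ[A] M₃),
      Function.Injective f → Function.Surjective g → Function.Exact f g →
        lam M₂ = lam M₁ + lam M₃)
    (N' N N'' : Type) [AddCommGroup N'] [Module A N'] [AddCommGroup N] [Module A N]
    [AddCommGroup N''] [Module A N'']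
    (f : N' →ₗ[A] N) (g : N →ₗ[A] N'')
    (hf : Function.Injective f) (hg : Function.Surjective g) (hfg : Function.Exact f g)
    (a b : A) :
    lam (LinearMap.range (LinearMap.lsmul A N (a * b))) ≤
      lam (LinearMap.range (LinearMap.lsmul A N' a)) +
        lam (LinearMap.range (LinearMap.lsmul A N'' b)) := by
  classical
  -- M = bN
  set M : Submodule A N := LinearMap.range (LinearMap.lsmul A N b) with hM
  -- α : M → N, multiplication by a ; range α = abN
  set α : M →ₗ[A] N := (LinearMap.lsmul A N a) ∘ₗ M.subtype with hα
  -- γ : M → N'' , restriction of g ; range γ = bN''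
  set γ : M →ₗ[A] N'' := g ∘ₗ M.subtype with hγ
  set K₀ : Submodule A M := LinearMap.ker α ⊓ LinearMap.ker γ with hK₀
  have hK₀α : K₀ ≤ LinearMap.ker α := inf_le_left
  have hK₀γ : K₀ ≤ LinearMap.ker γ := inf_le_right
  set α' : (M ⧸ K₀) →ₗ[A] N := K₀.liftQ α hK₀α with hα'
  set γ' : (M ⧸ K₀) →ₗ[A] N'' := K₀.liftQ γ hK₀γ with hγ'
  -- range α = abN
  have hrangeα : LinearMap.range α = LinearMap.range (LinearMap.lsmul A N (a * b)) := by
    have hcomp : LinearMap.lsmul A N (a * b)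
        = (LinearMap.lsmul A N a) ∘ₗ (LinearMap.lsmul A N b) := by
      ext x
      simp only [LinearMap.lsmul_apply, LinearMap.comp_apply, mul_smul]
    have h1 : LinearMap.range α = Submodule.map (LinearMap.lsmul A N a) M := by
      rw [hα, LinearMap.range_comp, Submodule.range_subtype]
    have h2 : LinearMap.range (LinearMap.lsmul A N (a * b))
        = Submodule.map (LinearMap.lsmul A N a) M := by
      rw [hcomp, LinearMap.range_comp, ← hM]
    rw [h1, h2]
  -- range γ = bN''
  have hrangeγ : LinearMap.range γ = LinearMap.range (LinearMap.lsmul A N'' b) := by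
    have hcomp : g ∘ₗ (LinearMap.lsmul A N b) = (LinearMap.lsmul A N'' b) ∘ₗ g := by
      ext x
      simp only [LinearMap.comp_apply, LinearMap.lsmul_apply, map_smul]
    have h1 : LinearMap.range γ = Submodule.map g M := by
      rw [hγ, LinearMap.range_comp, Submodule.range_subtype]
    have h2 : Submodule.map g M = LinearMap.range (LinearMap.lsmul A N'' b) := by
      rw [hM, ← LinearMap.range_comp, hcomp, LinearMap.range_comp,
        LinearMap.range_eq_top.mpr hg, Submodule.map_top]
    rw [h1, h2]
  -- Step 1 : lam (abN) ≤ lam (M ⧸ K₀)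
  have step1 : lam (LinearMap.range (LinearMap.lsmul A N (a * b))) ≤ lam (M ⧸ K₀) := by
    have hra' : LinearMap.range α' = LinearMap.range (LinearMap.lsmul A N (a * b)) := by
      rw [hα', Submodule.range_liftQ, hrangeα]
    have h := lam_split A lam hadd (M ⧸ K₀) N α'
    rw [hra'] at h
    rw [h]
    exact self_le_add_left _ _
  -- Step 2 : lam (M ⧸ K₀) = lam (ker γ') + lam (bN'')
  have step2 : lam (M ⧸ K₀)
      = lam (LinearMap.ker γ') + lam (LinearMap.range (LinearMap.lsmul A N'' b)) := by
    have hrγ' : LinearMap.range γ' = LinearMap.range (LinearMap.lsmul A N'' b) := by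
      rw [hγ', Submodule.range_liftQ, hrangeγ]
    have h := lam_split A lam hadd (M ⧸ K₀) N'' γ'
    rw [hrγ'] at h
    exact h
  -- Step 3 : lam (ker γ') ≤ lam (aN')
  have step3 : lam (LinearMap.ker γ')
      ≤ lam (LinearMap.range (LinearMap.lsmul A N' a)) := by
    set u : (LinearMap.ker γ') →ₗ[A] N := α' ∘ₗ (LinearMap.ker γ').subtype with hu
    -- every element of ker γ' is mkQ of an element of ker γ
    have hmem : ∀ z : LinearMap.ker γ',
        ∃ y : M, y ∈ LinearMap.ker γ ∧ K₀.mkQ y = (z : M ⧸ K₀) := by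
      intro z
      obtain ⟨y, hy2⟩ := K₀.mkQ_surjective (z : M ⧸ K₀)
      refine ⟨y, ?_, hy2⟩
      have h0 : γ' (K₀.mkQ y) = 0 := by
        rw [hy2]
        exact LinearMap.mem_ker.mp z.2
      rw [hγ', Submodule.mkQ_apply, Submodule.liftQ_apply] at h0
      exact LinearMap.mem_ker.mpr h0
    -- value of u on such an element
    have hval : ∀ (z : LinearMap.ker γ') (y : M), K₀.mkQ y = (z : M ⧸ K₀) → u z = α y := by
      intro z y hy2
      rw [hu]
      simp only [LinearMap.comp_apply, Submodule.subtype_apply]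
      rw [← hy2, hα', Submodule.mkQ_apply, Submodule.liftQ_apply]
    -- u is injective
    have huinj : Function.Injective u := by
      rw [← LinearMap.ker_eq_bot, eq_bot_iff]
      intro z hz
      obtain ⟨y, hy, hy2⟩ := hmem z
      have hz0 : α y = 0 := by
        rw [← hval z y hy2]
        exact LinearMap.mem_ker.mp hz
      have hyK : y ∈ K₀ := ⟨LinearMap.mem_ker.mpr hz0, hy⟩
      have hzz : (z : M ⧸ K₀) = 0 := by
        rw [← hy2, Submodule.mkQ_apply, Submodule.Quotient.mk_eq_zero]
        exact hyK
      have : z = 0 := Subtype.ext hzz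
      simp [this]
    -- range u lands inside f(aN')
    have hrange_le : LinearMap.range u ≤ LinearMap.range (f ∘ₗ LinearMap.lsmul A N' a) := by
      rintro x ⟨z, rfl⟩
      obtain ⟨y, hy, hy2⟩ := hmem z
      have hx : u z = α y := hval z y hy2
      have hgy : g (y : N) = 0 := by
        have := LinearMap.mem_ker.mp hy
        rw [hγ] at this
        simpa using this
      obtain ⟨w, hw⟩ := (hfg (y : N)).mp hgy
      refine ⟨w, ?_⟩
      rw [hx, hα]
      simp only [LinearMap.comp_apply, LinearMap.lsmul_apply, Submodule.subtype_apply]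
      rw [← hw, ← map_smul]
    -- f(aN') ≅ aN'
    have hfim : lam (LinearMap.range (f ∘ₗ LinearMap.lsmul A N' a))
        = lam (LinearMap.range (LinearMap.lsmul A N' a)) := by
      have hr : LinearMap.range (f ∘ₗ LinearMap.lsmul A N' a)
          = Submodule.map f (LinearMap.range (LinearMap.lsmul A N' a)) :=
        LinearMap.range_comp _ _
      rw [hr]
      exact (lam_eq_of_equiv A lam hadd _ _
        (Submodule.equivMapOfInjective f hf (LinearMap.range (LinearMap.lsmul A N' a)))).symm
    calc lam (LinearMap.ker γ')
        = lam (LinearMap.range u) :=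
          lam_eq_of_equiv A lam hadd _ _ (LinearEquiv.ofInjective u huinj)
      _ ≤ lam (LinearMap.range (f ∘ₗ LinearMap.lsmul A N' a)) :=
          lam_mono A lam hadd N hrange_le
      _ = lam (LinearMap.range (LinearMap.lsmul A N' a)) := hfim
  calc lam (LinearMap.range (LinearMap.lsmul A N (a * b)))
      ≤ lam (M ⧸ K₀) := step1
    _ = lam (LinearMap.ker γ') + lam (LinearMap.range (LinearMap.lsmul A N'' b)) := step2
    _ ≤ lam (LinearMap.range (LinearMap.lsmul A N' a))
        + lam (LinearMap.range (LinearMap.lsmul A N'' b)) := add_le_add_left step3 _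
end

section
/- Let 0 → N' → N → N'' → 0 be a short exact sequence of modules over a commutative ring, let λ be a length function additive on short exact sequences with λ(N') = 0, and let a be a ring element. Then λ(aN) = λ(aN''), where aM denotes the image of multiplication by a on M. -/
open scoped ENNReal

/-!
Intersecting `0 → N' → N → N'' → 0` with the submodule `aN` gives a short exact sequence
`0 → f⁻¹(aN) → aN → g(aN) → 0`. Since `g` is surjective, `g(aN) = aN''`, and `f⁻¹(aN)` is a
submodule of `N'`, so its length vanishes together with `λ(N')`.
-/

def IsShortExactAdditive {A : Type} [Ring A]
    (lam : ∀ (N : Type) [AddCommGroup N] [Module A N], ℝ≥0∞) : Prop :=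
  ∀ (M₁ M₂ M₃ : Type) [AddCommGroup M₁] [Module A M₁] [AddCommGroup M₂]
    [Module A M₂] [AddCommGroup M₃] [Module A M₃]
    (f : M₁ →ₗ[A] M₂) (g : M₂ →ₗ[A] M₃),
    Function.Injective f → Function.Surjective g → Function.Exact f g →
      lam M₂ = lam M₁ + lam M₃

section Restrict

variable {A M₁ M₂ M₃ : Type} [Ring A] [AddCommGroup M₁] [Module A M₁] [AddCommGroup M₂]
  [Module A M₂] [AddCommGroup M₃] [Module A M₃] {f : M₁ →ₗ[A] M₂} {g : M₂ →ₗ[A] M₃}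

theorem LinearMap.injective_restrict_comap (hf : Function.Injective f) (P : Submodule A M₂) :
    Function.Injective (f.restrict (p := P.comap f) (q := P) fun _ hx => hx) :=
  fun _ _ h => Subtype.ext (hf (congrArg Subtype.val h))

theorem Function.Exact.restrict_comap_submoduleMap (hfg : Function.Exact f g)
    (P : Submodule A M₂) :
    Function.Exact (f.restrict (p := P.comap f) (q := P) fun _ hx => hx) (g.submoduleMap P) := by
  rintro ⟨x, hx⟩
  constructor
  · intro hgx
    obtain ⟨y, rfl⟩ := (hfg x).mp (congrArg Subtype.val hgx)
    exact ⟨⟨y, hx⟩, rfl⟩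
  · rintro ⟨⟨y, hy⟩, hyx⟩
    obtain rfl : f y = x := congrArg Subtype.val hyx
    exact Subtype.ext (hfg.apply_apply_eq_zero y)

end Restrict

namespace IsShortExactAdditive

variable {A : Type} [Ring A] {lam : ∀ (N : Type) [AddCommGroup N] [Module A N], ℝ≥0∞}

theorem eq_add_comap_map (hlam : IsShortExactAdditive lam)
    {M₁ M₂ M₃ : Type} [AddCommGroup M₁] [Module A M₁] [AddCommGroup M₂] [Module A M₂]
    [AddCommGroup M₃] [Module A M₃] {f : M₁ →ₗ[A] M₂} {g : M₂ →ₗ[A] M₃}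
    (hf : Function.Injective f) (hfg : Function.Exact f g) (P : Submodule A M₂) :
    lam P = lam (P.comap f) + lam (P.map g) :=
  hlam _ _ _ _ _ (f.injective_restrict_comap hf P) (g.submoduleMap_surjective P)
    (hfg.restrict_comap_submoduleMap P)

theorem eq_zero_of_submodule (hlam : IsShortExactAdditive lam)
    {M : Type} [AddCommGroup M] [Module A M] (hM : lam M = 0) (K : Submodule A M) :
    lam K = 0 := by
  have h := hlam _ _ _ K.subtype K.mkQ K.injective_subtype K.mkQ_surjective
    (LinearMap.exact_subtype_mkQ K)
  rw [hM, eq_comm, add_eq_zero] at h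
  exact h.1

end IsShortExactAdditive

theorem LinearMap.map_range_lsmul {A M M' : Type} [CommRing A] [AddCommGroup M] [Module A M]
    [AddCommGroup M'] [Module A M'] {g : M →ₗ[A] M'} (hg : Function.Surjective g) (a : A) :
    (LinearMap.range (LinearMap.lsmul A M a)).map g = LinearMap.range (LinearMap.lsmul A M' a) := by
  have hcomm : g ∘ₗ LinearMap.lsmul A M a = LinearMap.lsmul A M' a ∘ₗ g :=
    LinearMap.ext fun x => g.map_smul a x
  rw [← LinearMap.range_comp, hcomm,
    LinearMap.range_comp_of_range_eq_top _ (LinearMap.range_eq_top.mpr hg)]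

/-- Let `0 → N' → N → N'' → 0` be a short exact sequence of modules over a commutative
ring, let `λ` be a length function additive on short exact sequences with `λ(N') = 0`,
and let `a` be a ring element.  Then `λ(aN) = λ(aN'')`, where `aM` denotes the image of
multiplication by `a` on `M`. -/
theorem lambda_smul_eq_of_sub_zero
    (A : Type) [CommRing A]
    (lam : ∀ (N : Type) [AddCommGroup N] [Module A N], ℝ≥0∞)
    (hadd : ∀ (M₁ M₂ M₃ : Type) [AddCommGroup M₁] [Module A M₁] [AddCommGroup M₂]
      [Module A M₂] [AddCommGroup M₃] [Module A M₃]
      (f : M₁ →ₗ[A] M₂) (g : M₂ →ₗ[A] M₃),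
      Function.Injective f → Function.Surjective g → Function.Exact f g →
        lam M₂ = lam M₁ + lam M₃)
    (N' N N'' : Type) [AddCommGroup N'] [Module A N'] [AddCommGroup N] [Module A N]
    [AddCommGroup N''] [Module A N'']
    (f : N' →ₗ[A] N) (g : N →ₗ[A] N'')
    (hf : Function.Injective f) (hg : Function.Surjective g) (hfg : Function.Exact f g)
    (hN' : lam N' = 0) (a : A) :
    lam (LinearMap.range (LinearMap.lsmul A N a)) =
      lam (LinearMap.range (LinearMap.lsmul A N'' a)) := by
  have hlam : IsShortExactAdditive lam := hadd
  rw [hlam.eq_add_comap_map hf hfg, LinearMap.map_range_lsmul hg,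
    hlam.eq_zero_of_submodule hN', zero_add]
end

section
/- Let M be a module over a commutative ring A and p ∈ A. If every element of M is killed by some power of p (M is p-power torsion) and N_{p} := ker(p : M → M) satisfies λ(r N_p) = 0 for an additive length function λ and some r ∈ A, then λ(r^n N_{p^n}) = 0 for all n ≥ 1, where N_{p^n} = ker(p^n : M → M). -/
open scoped ENNReal

/-- Let `M` be a `p`-power-torsion module over a commutative ring `A` and let `λ` be a
`[0,∞]`-valued length function on `A`-modules, additive on short exact sequences and
satisfying `λ(aN) ≤ λ(N)`.  If `N_p := ker(p : M → M)` satisfies `λ(r N_p) = 0` for some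
`r ∈ A`, then `λ(r^n N_{p^n}) = 0` for all `n ≥ 1`. -/
theorem lambda_rn_torsion_zero
    (A : Type) [CommRing A] (p : A)
    (lam : ∀ (N : Type) [AddCommGroup N] [Module A N], ℝ≥0∞)
    (hadd : ∀ (M₁ M₂ M₃ : Type) [AddCommGroup M₁] [Module A M₁] [AddCommGroup M₂]
      [Module A M₂] [AddCommGroup M₃] [Module A M₃]
      (f : M₁ →ₗ[A] M₂) (g : M₂ →ₗ[A] M₃),
      Function.Injective f → Function.Surjective g → Function.Exact f g →
        lam M₂ = lam M₁ + lam M₃)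
    (hmono : ∀ (N : Type) [AddCommGroup N] [Module A N] (a : A),
      lam (LinearMap.range (LinearMap.lsmul A N a)) ≤ lam N)
    (M : Type) [AddCommGroup M] [Module A M]
    (htor : ∀ m : M, ∃ n : ℕ, p ^ n • m = 0)
    (r : A)
    (h0 : lam (LinearMap.range (LinearMap.lsmul A (Submodule.torsionBy A M p) r)) = 0) :
    ∀ n : ℕ, 1 ≤ n →
      lam (LinearMap.range
        (LinearMap.lsmul A (Submodule.torsionBy A M (p ^ n)) (r ^ n))) = 0 := by
  classical
  -- `lam PUnit = 0`
  have hPUnit : lam PUnit = 0 := by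
    set N₁ := ↥(LinearMap.range (LinearMap.lsmul A (Submodule.torsionBy A M p) r))
    have h := hadd N₁ N₁ PUnit LinearMap.id 0 (fun a b h => h)
      (fun x => ⟨0, Subsingleton.elim _ _⟩)
      (by intro y; simp)
    rw [h0] at h
    simpa using h.symm
  -- isomorphism invariance
  have hcongr : ∀ (N P : Type) [AddCommGroup N] [Module A N] [AddCommGroup P] [Module A P],
      (N ≃ₗ[A] P) → lam N = lam P := by
    intro N P _ _ _ _ e
    have h := hadd N P PUnit e.toLinearMap 0 e.injective
      (fun x => ⟨0, Subsingleton.elim _ _⟩)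
      (LinearMap.exact_iff.mpr (by rw [LinearMap.ker_zero, LinearEquiv.range]))
    rw [hPUnit, add_zero] at h
    exact h.symm
  -- injective maps: `lam N ≤ lam P`
  have hinj : ∀ (N P : Type) [AddCommGroup N] [Module A N] [AddCommGroup P] [Module A P]
      (f : N →ₗ[A] P), Function.Injective f → lam N ≤ lam P := by
    intro N P _ _ _ _ f hf
    have h := hadd N P (P ⧸ LinearMap.range f) f (LinearMap.range f).mkQ hf
      (Submodule.mkQ_surjective _)
      (LinearMap.exact_iff.mpr (Submodule.ker_mkQ _))
    rw [h]; exact le_self_add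
  -- surjective maps: `lam P ≤ lam N`
  have hsurj : ∀ (N P : Type) [AddCommGroup N] [Module A N] [AddCommGroup P] [Module A P]
      (f : N →ₗ[A] P), Function.Surjective f → lam P ≤ lam N := by
    intro N P _ _ _ _ f hf
    have h := hadd (LinearMap.ker f) N P (LinearMap.ker f).subtype f
      (Submodule.injective_subtype _) hf
      (LinearMap.exact_iff.mpr (Submodule.range_subtype _).symm)
    rw [h]; exact le_add_self
  -- translating the statement `lam (range (lsmul on ↥S)) = lam (map (lsmul on M) S)`
  have heq : ∀ (S : Submodule A M) (a : A),
      lam ↥(LinearMap.range (LinearMap.lsmul A ↥S a))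
        = lam ↥(Submodule.map (LinearMap.lsmul A M a) S) := by
    intro S a
    refine hcongr _ _ ?_
    refine (Submodule.equivMapOfInjective S.subtype (Submodule.injective_subtype S)
      (LinearMap.range (LinearMap.lsmul A ↥S a))).trans (LinearEquiv.ofEq _ _ ?_)
    ext x
    simp only [Submodule.mem_map, LinearMap.mem_range, LinearMap.lsmul_apply]
    constructor
    · rintro ⟨y, ⟨s, rfl⟩, rfl⟩
      exact ⟨↑s, s.2, rfl⟩
    · rintro ⟨m, hm, rfl⟩
      exact ⟨a • (⟨m, hm⟩ : ↥S), ⟨⟨m, hm⟩, rfl⟩, rfl⟩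
  -- main induction, phrased with submodules of M
  have key : ∀ n : ℕ, 1 ≤ n →
      lam ↥(Submodule.map (LinearMap.lsmul A M (r ^ n)) (Submodule.torsionBy A M (p ^ n))) = 0 := by
    intro n hn
    induction n, hn using Nat.le_induction with
    | base =>
      rw [pow_one r, pow_one p, ← heq]
      exact h0
    | succ n hn ih =>
      set Tn1 := Submodule.torsionBy A M (p ^ (n + 1)) with hTn1
      set f : ↥Tn1 →ₗ[A] M := (LinearMap.lsmul A M (r ^ n * p)).comp Tn1.subtype with hf
      have hfapply : ∀ y : ↥Tn1, f y = (r ^ n * p) • (y : M) := fun y => rfl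
      -- the range of f lies in r^n T_n
      have hrange : LinearMap.range f
          ≤ Submodule.map (LinearMap.lsmul A M (r ^ n)) (Submodule.torsionBy A M (p ^ n)) := by
        rintro x ⟨y, rfl⟩
        have hy : p • (y : M) ∈ Submodule.torsionBy A M (p ^ n) := by
          rw [Submodule.mem_torsionBy_iff, smul_smul, ← pow_succ]
          exact (Submodule.mem_torsionBy_iff _ _).mp y.2
        refine ⟨p • (y : M), hy, ?_⟩
        show r ^ n • (p • (y : M)) = (r ^ n * p) • (y : M)
        rw [smul_smul]
      -- the quotient by ker f has lam = 0
      have hiQ : lam (↥Tn1 ⧸ LinearMap.ker f) = 0 := by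
        rw [hcongr _ _ f.quotKerEquivRange]
        have hle := hinj _ _ (Submodule.inclusion hrange) (Submodule.inclusion_injective hrange)
        exact le_antisymm (hle.trans_eq ih) zero_le
      -- the kernel of f, pushed into M
      set K' : Submodule A M := (LinearMap.ker f).map Tn1.subtype with hK'
      have hK'le : K' ≤ Tn1 := by
        rintro x ⟨k, _, rfl⟩; exact k.2
      -- r^(n+1) K' ⊆ r ⬝ (torsionBy p), hence lam = 0
      have hW0 : lam ↥(K'.map (LinearMap.lsmul A M (r ^ (n + 1)))) = 0 := by
        have hle : K'.map (LinearMap.lsmul A M (r ^ (n + 1)))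
            ≤ (Submodule.torsionBy A M p).map (LinearMap.lsmul A M r) := by
          rintro x ⟨k, hk, rfl⟩
          obtain ⟨k₀, hk₀, rfl⟩ := hk
          have hk₀0 : (r ^ n * p) • (k₀ : M) = 0 := by
            simpa [hfapply] using hk₀
          have hmem : r ^ n • (k₀ : M) ∈ Submodule.torsionBy A M p := by
            rw [Submodule.mem_torsionBy_iff, smul_smul, mul_comm]
            exact hk₀0
          refine ⟨r ^ n • (k₀ : M), hmem, ?_⟩
          show r • (r ^ n • (k₀ : M)) = r ^ (n + 1) • (k₀ : M)
          rw [smul_smul, ← pow_succ']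
        have h1 : lam ↥((Submodule.torsionBy A M p).map (LinearMap.lsmul A M r)) = 0 := by
          rw [← heq]; exact h0
        exact le_antisymm
          ((hinj _ _ (Submodule.inclusion hle) (Submodule.inclusion_injective hle)).trans_eq h1)
          zero_le
      -- main module X = r^(n+1) T_(n+1)
      set X : Submodule A M := Tn1.map (LinearMap.lsmul A M (r ^ (n + 1))) with hX
      have hWX : K'.map (LinearMap.lsmul A M (r ^ (n + 1))) ≤ X := Submodule.map_mono hK'le
      set W' : Submodule A ↥X := (K'.map (LinearMap.lsmul A M (r ^ (n + 1)))).comap X.subtype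
        with hW'
      have hW'0 : lam ↥W' = 0 := by
        rw [hcongr _ _ (Submodule.comapSubtypeEquivOfLe hWX)]
        exact hW0
      -- the quotient X ⧸ W' is a quotient of T_(n+1) ⧸ ker f
      have hquot0 : lam (↥X ⧸ W') = 0 := by
        set g : ↥Tn1 →ₗ[A] ↥X := LinearMap.codRestrict X
          ((LinearMap.lsmul A M (r ^ (n + 1))).comp Tn1.subtype)
          (fun y => ⟨↑y, y.2, rfl⟩) with hg
        have hgker : LinearMap.ker f ≤ W'.comap g := by
          intro k hk
          simp only [Submodule.mem_comap, hW']
          exact ⟨↑k, ⟨k, hk, rfl⟩, rfl⟩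
        set q := Submodule.mapQ (LinearMap.ker f) W' g hgker with hq
        have hqsurj : Function.Surjective q := by
          intro z
          obtain ⟨x, rfl⟩ := Submodule.Quotient.mk_surjective _ z
          obtain ⟨t, ht, hxt⟩ := x.2
          refine ⟨Submodule.Quotient.mk (⟨t, ht⟩ : ↥Tn1), ?_⟩
          rw [hq, Submodule.mapQ_apply]
          congr 1
          exact Subtype.ext hxt
        exact le_antisymm ((hsurj _ _ q hqsurj).trans_eq hiQ) zero_le
      -- combine via additivity
      have hX0 := hadd ↥W' ↥X (↥X ⧸ W') W'.subtype W'.mkQ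
        (Submodule.injective_subtype _) (Submodule.mkQ_surjective _)
        (LinearMap.exact_iff.mpr ((Submodule.ker_mkQ _).trans (Submodule.range_subtype _).symm))
      rw [hW'0, hquot0, add_zero] at hX0
      exact hX0
  intro n hn
  rw [heq]
  exact key n hn
end

section
/- Let M be a finite-length module over a local ring (A, m) containing an element π with π^p = p for a prime p. Then ℓ(M_p) ≤ p · ℓ(M_π), where M_x denotes the x-torsion submodule and ℓ denotes length. -/
/-- The length of a module, defined as the Krull dimension of its submodule lattice. -/
noncomputable def moduleLength (A : Type*) (M : Type*) [Semiring A] [AddCommMonoid M]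
    [Module A M] : WithBot ℕ∞ :=
  Order.krullDim (Submodule A M)

/-!
Multiplication by `π ^ n` maps `M_{π^(n+1)}` into `M_π` with kernel `M_{π^n}`. Since length is
additive on short exact sequences, this gives
`ℓ(M_{π^(n+1)}) ≤ ℓ(M_{π^n}) + ℓ(M_π)`, hence `ℓ(M_{π^n}) ≤ n ℓ(M_π)` by induction;
and `M_p = M_{π^p}`.
-/

lemma moduleLength_eq_length (R M : Type*) [Ring R] [AddCommGroup M] [Module R M] :
    moduleLength R M = Module.length R M :=
  (Module.coe_length R M).symm

lemma Module.length_le_add_of_exact {R M N P : Type*} [Ring R] [AddCommGroup M]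
    [AddCommGroup N] [AddCommGroup P] [Module R M] [Module R N] [Module R P]
    {f : N →ₗ[R] M} {g : M →ₗ[R] P} (hf : Function.Injective f) (H : Function.Exact f g) :
    Module.length R M ≤ Module.length R N + Module.length R P := by
  have H' : Function.Exact f g.rangeRestrict :=
    (LinearMap.range g).injective_subtype.comp_exact_iff_exact.mp H
  rw [Module.length_eq_add_of_exact f g.rangeRestrict hf g.surjective_rangeRestrict H']
  gcongr
  exact Module.length_le_of_injective _ (LinearMap.range g).injective_subtype

namespace Submodule

variable {R M : Type*} [CommRing R] [AddCommGroup M] [Module R M]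

lemma exact_inclusion_torsionBy_pow_smul (π : R) (n : ℕ) :
    Function.Exact
      (inclusion (torsionBy_le_torsionBy_of_dvd _ _ (pow_dvd_pow π n.le_succ)) :
        torsionBy R M (π ^ n) →ₗ[R] torsionBy R M (π ^ (n + 1)))
      ((LinearMap.lsmul R M (π ^ n)).restrict fun x hx => by
        rw [mem_torsionBy_iff] at hx ⊢
        rwa [LinearMap.lsmul_apply, smul_smul, ← pow_succ']) := by
  rintro ⟨x, hx⟩
  simp only [Set.mem_range, Subtype.ext_iff, LinearMap.restrict_apply, coe_inclusion,
    LinearMap.lsmul_apply, ZeroMemClass.coe_zero, Subtype.exists, mem_torsionBy_iff,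
    exists_prop, exists_eq_right]

lemma length_torsionBy_pow_succ_le (π : R) (n : ℕ) :
    Module.length R (torsionBy R M (π ^ (n + 1))) ≤
      Module.length R (torsionBy R M (π ^ n)) + Module.length R (torsionBy R M π) :=
  Module.length_le_add_of_exact (inclusion_injective _) (exact_inclusion_torsionBy_pow_smul π n)

lemma length_torsionBy_pow_le (π : R) (n : ℕ) :
    Module.length R (torsionBy R M (π ^ n)) ≤ n • Module.length R (torsionBy R M π) := by
  induction n with
  | zero => rw [pow_zero, torsionBy_one, Module.length_bot, zero_nsmul]
  | succ n ih =>
    calc Module.length R (torsionBy R M (π ^ (n + 1)))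
        ≤ Module.length R (torsionBy R M (π ^ n)) + Module.length R (torsionBy R M π) :=
          length_torsionBy_pow_succ_le π n
      _ ≤ (n + 1) • Module.length R (torsionBy R M π) := by
          rw [succ_nsmul]
          gcongr

end Submodule

theorem length_pTorsion_le_general
    (A : Type) [CommRing A] (p : ℕ)
    (π : A) (hπ : π ^ p = (p : A))
    (M : Type) [AddCommGroup M] [Module A M] :
    moduleLength A (Submodule.torsionBy A M ((p : A))) ≤
      p • moduleLength A (Submodule.torsionBy A M π) := by
  rw [moduleLength_eq_length, moduleLength_eq_length, ← hπ]
  exact_mod_cast Submodule.length_torsionBy_pow_le π p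

/-- Let `M` be a finite-length module over a local ring `A` containing an element `π`
with `π ^ p = p` for a prime `p`.  Then `ℓ(M_p) ≤ p · ℓ(M_π)`, where `M_x` is the
`x`-torsion submodule. -/
theorem length_pTorsion_le
    (A : Type) [CommRing A] [IsLocalRing A] (p : ℕ) (hp : p.Prime)
    (π : A) (hπ : π ^ p = (p : A))
    (M : Type) [AddCommGroup M] [Module A M] (hM : IsFiniteLength A M) :
    moduleLength A (Submodule.torsionBy A M ((p : A))) ≤
      p • moduleLength A (Submodule.torsionBy A M π) :=
  length_pTorsion_le_general A p π hπ M
end
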